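/- Let U be a real n×d matrix whose columns are pairwise orthogonal with squared Euclidean norms ‖U_{·,i}‖² = μ_i ≥ 0 for i = 1,…,d; let S be a d×d diagonal matrix whose diagonal entries are each +1 or −1; let C be a real n×n symmetric idempotent matrix (Cᵀ = C, C·C = C); and set U_c = C·U. Then for every real symmetric n×n matrix F, the Frobenius norm satisfies ‖F − U_c·S·U_cᵀ‖_F ≤ ‖F − U·S·Uᵀ‖_F + 2·√(μ_1 + … + μ_d) · ‖U − U_c‖_F. -/
import Mathlib


open Matrix

/-- The Frobenius norm of a real matrix. -/
noncomputable def frobeniusNorm {n m : ℕ} (M : Matrix (Fin n) (Fin m) ℝ) : ℝ :=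
  Real.sqrt (∑ i, ∑ j, (M i j) ^ 2)

attribute [local instance] Matrix.frobeniusNormedAddCommGroup

lemma frob_eq_norm {n m : ℕ} (M : Matrix (Fin n) (Fin m) ℝ) :
    frobeniusNorm M = ‖M‖ := by
  rw [frobeniusNorm, Matrix.frobenius_norm_def, Real.sqrt_eq_rpow]
  congr 1
  simp [Real.rpow_two, Real.norm_eq_abs, sq_abs]

lemma sumsq_eq_trace {n m : ℕ} (A : Matrix (Fin n) (Fin m) ℝ) :
    ∑ i, ∑ j, (A i j) ^ 2 = Matrix.trace (Aᵀ * A) := by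
  rw [Matrix.trace]
  simp_rw [Matrix.diag, Matrix.mul_apply, Matrix.transpose_apply, sq]
  exact Finset.sum_comm

/-- Let `U` have pairwise orthogonal columns with squared norms
`μ_i ≥ 0`, `S` a `±1` diagonal matrix, `C` a symmetric idempotent matrix, and
`U_c = C·U`. Then for every symmetric matrix `F`,
`‖F − U_c S U_cᵀ‖_F ≤ ‖F − U S Uᵀ‖_F + 2 √(μ₁ + ⋯ + μ_d) ‖U − U_c‖_F`. -/
theorem stmt_14 {n d : ℕ} (U : Matrix (Fin n) (Fin d) ℝ)
    (horth : ∀ i j : Fin d, i ≠ j → ∑ r, U r i * U r j = 0)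
    (μ : Fin d → ℝ) (hμ : ∀ i, ∑ r, (U r i) ^ 2 = μ i) (hμpos : ∀ i, 0 ≤ μ i)
    (s : Fin d → ℝ) (hs : ∀ i, s i = 1 ∨ s i = -1)
    (C : Matrix (Fin n) (Fin n) ℝ) (hCsym : Cᵀ = C) (hCidem : C * C = C)
    (Uc : Matrix (Fin n) (Fin d) ℝ) (hUc : Uc = C * U)
    (F : Matrix (Fin n) (Fin n) ℝ) (hFsym : Fᵀ = F) :
    frobeniusNorm (F - Uc * Matrix.diagonal s * Ucᵀ)
      ≤ frobeniusNorm (F - U * Matrix.diagonal s * Uᵀ)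
        + 2 * Real.sqrt (∑ i, μ i) * frobeniusNorm (U - Uc) := by
  have hs2 : ∀ i, s i ^ 2 = 1 := fun i => by rcases hs i with h | h <;> rw [h] <;> norm_num
  set D := Matrix.diagonal s with hD
  set E := U - Uc with hE
  -- ‖U‖ = √Σμ
  have hU_norm : frobeniusNorm U = Real.sqrt (∑ i, μ i) := by
    rw [frobeniusNorm, Finset.sum_comm]
    congr 1
    exact Finset.sum_congr rfl fun j _ => hμ j
  -- ‖D * Uᵀ‖ = ‖U‖
  have hDU : frobeniusNorm (D * Uᵀ) = frobeniusNorm U := by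
    rw [frobeniusNorm, frobeniusNorm, Finset.sum_comm]
    congr 1
    apply Finset.sum_congr rfl
    intro i _
    apply Finset.sum_congr rfl
    intro j _
    rw [Matrix.diagonal_mul, Matrix.transpose_apply, mul_pow, hs2, one_mul]
  -- ‖Uc * D‖ = ‖Uc‖
  have hUcD : frobeniusNorm (Uc * D) = frobeniusNorm Uc := by
    rw [frobeniusNorm, frobeniusNorm]
    congr 1
    apply Finset.sum_congr rfl
    intro i _
    apply Finset.sum_congr rfl
    intro j _
    rw [Matrix.mul_diagonal, mul_pow, hs2, mul_one]
  -- ‖Uc‖ ≤ ‖U‖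
  have hUc_le : frobeniusNorm Uc ≤ frobeniusNorm U := by
    apply Real.sqrt_le_sqrt
    rw [sumsq_eq_trace, sumsq_eq_trace, hUc]
    have h1 : (C * U)ᵀ * (C * U) = Uᵀ * C * U := by
      rw [Matrix.transpose_mul, hCsym, Matrix.mul_assoc, Matrix.mul_assoc, ← Matrix.mul_assoc C,
        hCidem]
    rw [h1]
    have h2 : Uᵀ * U - Uᵀ * C * U = ((1 - C) * U)ᵀ * ((1 - C) * U) := by
      have hsym : (1 - C)ᵀ = 1 - C := by rw [Matrix.transpose_sub, Matrix.transpose_one, hCsym]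
      have hidem : (1 - C) * (1 - C) = 1 - C := by
        rw [Matrix.sub_mul, Matrix.mul_sub, Matrix.mul_sub, hCidem]
        simp
      rw [Matrix.transpose_mul, hsym, Matrix.mul_assoc Uᵀ C U,
        Matrix.mul_assoc Uᵀ (1 - C) ((1 - C) * U), ← Matrix.mul_assoc (1 - C) (1 - C) U,
        hidem, Matrix.sub_mul, Matrix.one_mul, Matrix.mul_sub]
    have h3 : 0 ≤ Matrix.trace (Uᵀ * U - Uᵀ * C * U) := by
      rw [h2, ← sumsq_eq_trace]
      positivity
    rw [Matrix.trace_sub] at h3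
    linarith
  -- decomposition
  have key : F - Uc * D * Ucᵀ = (F - U * D * Uᵀ) + (E * (D * Uᵀ) + (Uc * D) * Eᵀ) := by
    rw [hE, Matrix.transpose_sub, Matrix.sub_mul, Matrix.mul_sub]
    rw [← Matrix.mul_assoc, ← Matrix.mul_assoc]
    abel
  rw [key]
  simp only [frob_eq_norm] at *
  calc ‖(F - U * D * Uᵀ) + (E * (D * Uᵀ) + Uc * D * Eᵀ)‖
      ≤ ‖F - U * D * Uᵀ‖ + (‖E * (D * Uᵀ)‖ + ‖Uc * D * Eᵀ‖) :=
        le_trans (norm_add_le _ _) (by gcongr; exact norm_add_le _ _)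
    _ ≤ ‖F - U * D * Uᵀ‖ + (‖E‖ * ‖D * Uᵀ‖ + ‖Uc * D‖ * ‖Eᵀ‖) := by
        gcongr
        · exact Matrix.frobenius_norm_mul _ _
        · exact Matrix.frobenius_norm_mul _ _
    _ ≤ ‖F - U * D * Uᵀ‖ + 2 * Real.sqrt (∑ i, μ i) * ‖E‖ := by
        rw [hDU, hU_norm, Matrix.frobenius_norm_transpose, hUcD]
        have hEnn : (0:ℝ) ≤ ‖E‖ := norm_nonneg _
        nlinarith [hUc_le, Real.sqrt_nonneg (∑ i, μ i)]
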